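/- Let w be a weight with BOPS (φ_n, φ̄_n) and let β* ∈ ℂ∖(𝕋∪{0}) be such that ξ_n(β*) ≠ 0 for all n ≥ 0. Let (Φ_n, Φ̄_n) be a BOPS for the modified weight ζ ↦ w(ζ)/(1−β* ζ^(−1)), with leading coefficients κ⁻_n and coefficients r⁻_n := Φ_n(0)/κ⁻_n, r̄⁻_n := Φ̄_n(0)/κ⁻_n. Then for all n ≥ 1: (κ⁻_n)² = κ_n κ_(n−1) β* ξ_(n−1)(β*)/ξ_n(β*); r⁻_n = (φ_n(0) ξ_(n−1)(β*) − φ_(n−1)(0) ξ_n(β*))/(κ_n ξ_(n−1)(β*)); and r̄⁻_n = ξ*_(n−1)(β*)/(β* ξ_(n−1)(β*)). -/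

import Mathlib

open Polynomial Matrix Filter

noncomputable section

/-- `(1/(2πi)) ∮_𝕋 f(ζ) dζ/ζ`, written as `(1/(2π)) ∫_0^{2π} f(e^{iθ}) dθ`. -/
def circleAvg (f : ℂ → ℂ) : ℂ :=
  (2 * Real.pi : ℂ)⁻¹ * ∫ θ in (0:ℝ)..(2 * Real.pi), f (Complex.exp (θ * Complex.I))

/-- Fourier coefficient `w_k` of a weight `w` on the unit circle. -/
def fCoeff (w : ℂ → ℂ) (k : ℤ) : ℂ := circleAvg fun ζ => w ζ * ζ ^ (-k)

/-- Toeplitz determinant `I_n[w] = det (w_{j-k})_{j,k=0..n-1}`. -/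
def toeplitzDet (w : ℂ → ℂ) (n : ℕ) : ℂ :=
  (Matrix.of fun j k : Fin n => fCoeff w ((j : ℤ) - (k : ℤ))).det

/-- The Carathéodory function `F(z)`. -/
def cara (w : ℂ → ℂ) (z : ℂ) : ℂ := circleAvg fun ζ => (ζ + z) / (ζ - z) * w ζ

/-- A bi-orthogonal polynomial system (BOPS) on the unit circle for the weight `w`:
polynomials `φ_n`, `φ̄_n` of exact degree `n` with common leading coefficient `κ_n ≠ 0`,
bi-orthonormal with respect to `w`. -/
structure BOPS (w : ℂ → ℂ) where
  φ : ℕ → Polynomial ℂ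
  φb : ℕ → Polynomial ℂ
  κ : ℕ → ℂ
  κ_ne : ∀ n, κ n ≠ 0
  degφ : ∀ n, (φ n).degree ≤ n
  degφb : ∀ n, (φb n).degree ≤ n
  leadφ : ∀ n, (φ n).coeff n = κ n
  leadφb : ∀ n, (φb n).coeff n = κ n
  orth : ∀ m n, circleAvg (fun ζ => w ζ * (φ m).eval ζ * (φb n).eval ζ⁻¹)
      = if m = n then 1 else 0

namespace BOPS

variable {w : ℂ → ℂ}

/-- The reciprocal polynomial `φ*_n(z) = z^n φ̄_n(1/z)`. -/
def φs (S : BOPS w) (n : ℕ) : Polynomial ℂ := (S.φb n).reflect n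

/-- `r_n = φ_n(0)/κ_n`. -/
def r (S : BOPS w) (n : ℕ) : ℂ := (S.φ n).eval 0 / S.κ n

/-- `r̄_n = φ̄_n(0)/κ_n`. -/
def rb (S : BOPS w) (n : ℕ) : ℂ := (S.φb n).eval 0 / S.κ n

/-- Associated function `ξ_n`. -/
def ξ (S : BOPS w) : ℕ → ℂ → ℂ
  | 0, z => S.κ 0 * (fCoeff w 0 + cara w z)
  | n + 1, z => circleAvg fun ζ => (ζ + z) / (ζ - z) * w ζ * (S.φ (n + 1)).eval ζ

/-- Associated function `ξ*_n`. -/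
def ξs (S : BOPS w) : ℕ → ℂ → ℂ
  | 0, z => S.κ 0 * (fCoeff w 0 - cara w z)
  | n + 1, z =>
      -z ^ (n + 1) * circleAvg fun ζ => (ζ + z) / (ζ - z) * w ζ * (S.φb (n + 1)).eval ζ⁻¹

end BOPS

/-- A square matrix of size `K+1` built from a distinguished first row and `K` further rows. -/
def rowMat {K : ℕ} (top : Fin (K + 1) → ℂ) (rest : Fin K → Fin (K + 1) → ℂ) :
    Matrix (Fin (K + 1)) (Fin (K + 1)) ℂ :=
  Matrix.of fun i j => Fin.cases (top j) (fun r => rest r j) i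

end

/-
On the unit circle the modified weight `W = w / (1 - β ζ⁻¹)` satisfies `W (ζ - β) = w ζ` and
`W (1 - β ζ⁻¹) = w`. For the pairings `⟨p, q⟩_v = ∮ v p(ζ) q(1/ζ)` this gives
`⟨(X - β) p, q⟩_W = ⟨X p, q⟩_w` and `⟨p, q⟩_w = ⟨p, q⟩_W - β ⟨p, X q⟩_W`, and, since
`(ζ + β)/(ζ - β) = 2/(1 - β ζ⁻¹) - 1`, the associated functions become `W`-pairings:
`ξ_n(β) = 2 ⟨φ_n, 1⟩_W` and `ξ*_n(β) = -2 β^(n+1) ⟨1, X φ̄_n⟩_W`.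

By the second relation `Φ_n` is `w`-orthogonal to all polynomials of degree `≤ n - 2`, so
`Φ_n = a φ_n + b φ_(n-1)`. Leading coefficients give `a = κ⁻_n / κ_n`, the `w`-pairing with
`φ̄_(n-1)` gives `b = -β κ_(n-1) / κ⁻_n`, and `⟨Φ_n, 1⟩_W = 0` gives `a ξ_n(β) + b ξ_(n-1)(β) = 0`;
this determines `κ⁻_n` and `r⁻_n`. For `r̄⁻_n`, expand the reversed polynomial `Φ*_n` in the basis
`(φ_j)`: by the first relation its coefficients are `φ̄_j(0) / κ⁻_n` for `j < n`, and
`Φ̄_n(0) / κ_n` for `j = n`. Pairing this expansion with `1` against `W`, and evaluating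
`∑_(j<n) φ̄_j(0) ξ_j(β)` by the Christoffel–Darboux formula at `0`, yields `Φ̄_n(0)`.
-/

open Metric MeasureTheory

section CircleAverage

lemma ne_zero_of_mem_sphere_one {ζ : ℂ} (hζ : ζ ∈ sphere (0 : ℂ) 1) : ζ ≠ 0 := by
  rintro rfl
  simp at hζ

lemma continuousOn_inv_sphere : ContinuousOn (fun ζ : ℂ => ζ⁻¹) (sphere 0 1) :=
  continuousOn_inv₀.mono fun _ hζ => ne_zero_of_mem_sphere_one hζ

lemma intervalIntegrable_circleAvg_integrand {f : ℂ → ℂ} (hf : ContinuousOn f (sphere 0 1))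
    (a b : ℝ) :
    IntervalIntegrable (fun θ : ℝ => f (Complex.exp (θ * Complex.I))) volume a b :=
  (hf.comp_continuous (by fun_prop) fun θ => by
    simp [Complex.norm_exp_ofReal_mul_I]).intervalIntegrable a b

lemma circleAvg_congr {f g : ℂ → ℂ} (h : Set.EqOn f g (sphere 0 1)) :
    circleAvg f = circleAvg g := by
  unfold circleAvg
  congr 1
  exact intervalIntegral.integral_congr fun θ _ => h (by simp [Complex.norm_exp_ofReal_mul_I])

lemma circleAvg_add {f g : ℂ → ℂ} (hf : ContinuousOn f (sphere 0 1))
    (hg : ContinuousOn g (sphere 0 1)) :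
    circleAvg (fun ζ => f ζ + g ζ) = circleAvg f + circleAvg g := by
  unfold circleAvg
  rw [intervalIntegral.integral_add (intervalIntegrable_circleAvg_integrand hf _ _)
    (intervalIntegrable_circleAvg_integrand hg _ _), mul_add]

lemma circleAvg_sub {f g : ℂ → ℂ} (hf : ContinuousOn f (sphere 0 1))
    (hg : ContinuousOn g (sphere 0 1)) :
    circleAvg (fun ζ => f ζ - g ζ) = circleAvg f - circleAvg g := by
  unfold circleAvg
  rw [intervalIntegral.integral_sub (intervalIntegrable_circleAvg_integrand hf _ _)
    (intervalIntegrable_circleAvg_integrand hg _ _), mul_sub]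

lemma circleAvg_const_mul (c : ℂ) (f : ℂ → ℂ) :
    circleAvg (fun ζ => c * f ζ) = c * circleAvg f := by
  unfold circleAvg
  rw [intervalIntegral.integral_const_mul, mul_left_comm]

end CircleAverage

section Reflect

variable {R : Type*} [Semiring R] {f : R[X]} {N : ℕ}

lemma degree_reflect_le (hf : f.natDegree ≤ N) : (f.reflect N).degree ≤ N :=
  degree_le_of_natDegree_le (natDegree_reflect_le.trans (max_le le_rfl hf))

lemma coeff_reflect_self : (f.reflect N).coeff N = f.coeff 0 := by
  rw [coeff_reflect, revAt_le le_rfl, Nat.sub_self]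

lemma reflect_succ (hf : f.natDegree ≤ N) : f.reflect (N + 1) = X * f.reflect N := by
  have h := reflect_mul f (1 : R[X]) hf (natDegree_one.trans_le zero_le_one)
  rwa [mul_one, reflect_one, pow_one, ← X_mul] at h

end Reflect

lemma eval_reflect {K : Type*} [Field K] {f : K[X]} {N : ℕ} (hf : f.natDegree ≤ N) {z : K}
    (hz : z ≠ 0) :
    (f.reflect N).eval z = z ^ N * f.eval z⁻¹ := by
  let := invertibleOfNonzero (inv_ne_zero hz)
  have h := eval₂_reflect_mul_pow (RingHom.id K) z⁻¹ N f hf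
  rw [invOf_eq_inv, inv_inv] at h
  rw [← eval₂_id, ← eval₂_id, ← h, mul_left_comm, ← mul_pow, mul_inv_cancel₀ hz, one_pow,
    mul_one]

lemma degree_X_mul_le_succ {R : Type*} [Semiring R] {p : R[X]} {d : ℕ} (hp : p.degree ≤ d) :
    (X * p).degree ≤ ((d + 1 : ℕ) : WithBot ℕ) :=
  (degree_mul_le _ _).trans <| by
    rw [add_comm]
    push_cast
    exact add_le_add hp degree_X_le

lemma exists_mul_X_sub_C_eq_X_pow_sub_C {R : Type*} [CommRing R] [Nontrivial R] (β : R)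
    (m : ℕ) :
    ∃ G : R[X], (X - C β) * G = X ^ (m + 1) - C (β ^ (m + 1)) ∧ G.Monic ∧ G.natDegree = m := by
  refine ⟨(X ^ (m + 1) - C (β ^ (m + 1))) /ₘ (X - C β),
    mul_divByMonic_eq_iff_isRoot.mpr (by simp), ?_, ?_⟩
  · refine (monic_X_sub_C β).of_mul_monic_left ?_
    rw [mul_divByMonic_eq_iff_isRoot.mpr (by simp)]
    exact monic_X_pow_sub_C _ m.succ_ne_zero
  · rw [natDegree_divByMonic _ (monic_X_sub_C β), natDegree_X_pow_sub_C, natDegree_X_sub_C,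
      Nat.add_sub_cancel]

section Biorthogonal

variable {K : Type*} [Field K] (B : K[X] →ₗ[K] K[X] →ₗ[K] K) {ψ χ : ℕ → K[X]}
  (hψ : ∀ n, (ψ n).degree = n) (horth : ∀ m n, B (ψ m) (χ n) = if m = n then 1 else 0)
include hψ horth

theorem eq_sum_smul_of_biorthogonal {N : ℕ} {p : K[X]} (hp : p.degree ≤ N) :
    p = ∑ j ∈ Finset.range (N + 1), B p (χ j) • ψ j := by
  let seq : Sequence K := ⟨ψ, hψ⟩
  have hspan : p ∈ Submodule.span K (seq '' Set.Iic N) := by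
    rw [seq.span_degreeLE fun i _ => (leadingCoeff_ne_zero.mpr (seq.ne_zero i)).isUnit]
    exact mem_degreeLE.mpr hp
  clear hp
  induction hspan using Submodule.span_induction with
  | mem x hx =>
      obtain ⟨k, hk, rfl⟩ := hx
      simp [seq, horth, ite_smul, Nat.lt_succ_of_le hk]
  | zero => simp
  | add x y _ _ hx hy =>
      simp only [map_add, LinearMap.add_apply, add_smul, Finset.sum_add_distrib]
      exact congrArg₂ (· + ·) hx hy
  | smul a x _ hx =>
      simp only [map_smul, LinearMap.smul_apply, smul_eq_mul, mul_smul, ← Finset.smul_sum]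
      exact congrArg (a • ·) hx

theorem apply_eq_coeff_div_of_biorthogonal {N : ℕ} {p : K[X]} (hp : p.degree ≤ N) :
    B p (χ N) = p.coeff N / (ψ N).coeff N := by
  have hcoeff := congrArg (coeff · N) (eq_sum_smul_of_biorthogonal B hψ horth hp)
  simp only [finsetSum_coeff, coeff_smul, smul_eq_mul] at hcoeff
  rw [Finset.sum_eq_single N (fun j hj hjN => ?_) (by simp)] at hcoeff
  · rw [eq_div_iff (coeff_ne_zero_of_eq_degree (hψ N)), hcoeff]
  · have hjN : j < N := lt_of_le_of_ne (Nat.lt_succ_iff.mp (Finset.mem_range.mp hj)) hjN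
    rw [coeff_eq_zero_of_degree_lt ((hψ j).trans_lt (by exact_mod_cast hjN)), mul_zero]

end Biorthogonal

section Pairing

variable {v : ℂ → ℂ}

lemma continuousOn_circlePairing_integrand (hv : ContinuousOn v (sphere 0 1)) (p q : ℂ[X]) :
    ContinuousOn (fun ζ => v ζ * p.eval ζ * q.eval ζ⁻¹) (sphere 0 1) :=
  (hv.mul p.continuous.continuousOn).mul (q.continuous.comp_continuousOn continuousOn_inv_sphere)

noncomputable def circlePairing (hv : ContinuousOn v (sphere 0 1)) : ℂ[X] →ₗ[ℂ] ℂ[X] →ₗ[ℂ] ℂ :=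
  LinearMap.mk₂ ℂ (fun p q => circleAvg fun ζ => v ζ * p.eval ζ * q.eval ζ⁻¹)
    (fun p₁ p₂ q => by
      rw [← circleAvg_add (continuousOn_circlePairing_integrand hv p₁ q)
        (continuousOn_circlePairing_integrand hv p₂ q)]
      exact circleAvg_congr fun ζ _ => by simp only [eval_add]; ring)
    (fun c p q => by
      rw [smul_eq_mul, ← circleAvg_const_mul]
      exact circleAvg_congr fun ζ _ => by simp only [eval_smul, smul_eq_mul]; ring)
    (fun p q₁ q₂ => by
      rw [← circleAvg_add (continuousOn_circlePairing_integrand hv p q₁)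
        (continuousOn_circlePairing_integrand hv p q₂)]
      exact circleAvg_congr fun ζ _ => by simp only [eval_add]; ring)
    (fun c p q => by
      rw [smul_eq_mul, ← circleAvg_const_mul]
      exact circleAvg_congr fun ζ _ => by simp only [eval_smul, smul_eq_mul]; ring)

variable (hv : ContinuousOn v (sphere 0 1))

lemma circlePairing_apply (p q : ℂ[X]) :
    circlePairing hv p q = circleAvg fun ζ => v ζ * p.eval ζ * q.eval ζ⁻¹ := rfl

lemma fCoeff_zero_eq_circlePairing : fCoeff v 0 = circlePairing hv 1 1 := by
  simp [fCoeff, circlePairing_apply]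

lemma circlePairing_congr {v' : ℂ → ℂ} (hv' : ContinuousOn v' (sphere 0 1)) {p q p' q' : ℂ[X]}
    (h : ∀ ζ ∈ sphere (0 : ℂ) 1,
      v ζ * p.eval ζ * q.eval ζ⁻¹ = v' ζ * p'.eval ζ * q'.eval ζ⁻¹) :
    circlePairing hv p q = circlePairing hv' p' q' :=
  circleAvg_congr h

lemma circlePairing_C (c : ℂ) (q : ℂ[X]) : circlePairing hv (C c) q = c * circlePairing hv 1 q := by
  rw [← smul_eq_mul, ← LinearMap.smul_apply, ← map_smul, smul_eq_C_mul, mul_one]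

lemma circlePairing_X_mul_X_mul (p q : ℂ[X]) :
    circlePairing hv (X * p) (X * q) = circlePairing hv p q :=
  circlePairing_congr hv hv fun ζ hζ => by
    have := ne_zero_of_mem_sphere_one hζ
    simp only [eval_mul, eval_X]
    field_simp

lemma circlePairing_reflect {f : ℂ[X]} {N : ℕ} (hf : f.natDegree ≤ N) (q : ℂ[X]) :
    circlePairing hv (f.reflect N) q = circlePairing hv (X ^ N) (f * q) :=
  circlePairing_congr hv hv fun ζ hζ => by
    rw [eval_reflect hf (ne_zero_of_mem_sphere_one hζ)]
    simp only [eval_mul, eval_pow, eval_X]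
    ring

end Pairing

namespace BOPS

variable {v : ℂ → ℂ} (S : BOPS v)

lemma degree_φ (n : ℕ) : (S.φ n).degree = n :=
  degree_eq_of_le_of_coeff_ne_zero (S.degφ n) (S.leadφ n ▸ S.κ_ne n)

lemma degree_φb (n : ℕ) : (S.φb n).degree = n :=
  degree_eq_of_le_of_coeff_ne_zero (S.degφb n) (S.leadφb n ▸ S.κ_ne n)

lemma natDegree_φb_le (n : ℕ) : (S.φb n).natDegree ≤ n :=
  natDegree_le_of_degree_le (S.degφb n)

lemma φ_zero : S.φ 0 = C (S.κ 0) := by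
  rw [eq_C_of_degree_le_zero (S.degφ 0), S.leadφ]

lemma φb_zero : S.φb 0 = C (S.κ 0) := by
  rw [eq_C_of_degree_le_zero (S.degφb 0), S.leadφb]

lemma eq_sum_circlePairing_φb_smul_φ (hv : ContinuousOn v (sphere 0 1)) {N : ℕ} {p : ℂ[X]}
    (hp : p.degree ≤ N) :
    p = ∑ j ∈ Finset.range (N + 1), circlePairing hv p (S.φb j) • S.φ j :=
  eq_sum_smul_of_biorthogonal (circlePairing hv) S.degree_φ S.orth hp

lemma circlePairing_φb (hv : ContinuousOn v (sphere 0 1)) {N : ℕ} {p : ℂ[X]} (hp : p.degree ≤ N) :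
    circlePairing hv p (S.φb N) = p.coeff N / S.κ N := by
  rw [apply_eq_coeff_div_of_biorthogonal (circlePairing hv) S.degree_φ S.orth hp, S.leadφ]

lemma circlePairing_φ (hv : ContinuousOn v (sphere 0 1)) {N : ℕ} {q : ℂ[X]} (hq : q.degree ≤ N) :
    circlePairing hv (S.φ N) q = q.coeff N / S.κ N := by
  have horth (m n : ℕ) : (circlePairing hv).flip (S.φb m) (S.φ n) = if m = n then 1 else 0 := by
    rw [LinearMap.flip_apply, circlePairing_apply, S.orth]
    exact if_congr eq_comm rfl rfl
  rw [← LinearMap.flip_apply, apply_eq_coeff_div_of_biorthogonal _ S.degree_φb horth hq,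
    S.leadφb]

/-- The Christoffel–Darboux formula at `0`. -/
lemma sum_eval_zero_smul_φ (hv : ContinuousOn v (sphere 0 1)) (m : ℕ) :
    ∑ j ∈ Finset.range (m + 1), (S.φb j).eval 0 • S.φ j = S.κ m • S.φs m := by
  rw [S.eq_sum_circlePairing_φb_smul_φ hv (p := S.φs m) (degree_reflect_le (S.natDegree_φb_le m)),
    Finset.smul_sum]
  refine Finset.sum_congr rfl fun j hj => ?_
  have hjm : (S.φb j).natDegree ≤ m :=
    (S.natDegree_φb_le j).trans (Nat.lt_succ_iff.mp (Finset.mem_range.mp hj))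
  rw [φs, circlePairing_reflect hv (S.natDegree_φb_le m), mul_comm, ← circlePairing_reflect hv hjm,
    S.circlePairing_φb hv (degree_reflect_le hjm), coeff_reflect_self, coeff_zero_eq_eval_zero,
    smul_smul, mul_div_cancel₀ _ (S.κ_ne m)]

end BOPS

section GeronimusWeight

noncomputable def geronimusWeight (w : ℂ → ℂ) (β : ℂ) : ℂ → ℂ := fun ζ => w ζ / (1 - β * ζ⁻¹)

variable {w : ℂ → ℂ} {β : ℂ}

lemma sub_ne_zero_of_mem_sphere (hβ : ‖β‖ ≠ 1) {ζ : ℂ} (hζ : ζ ∈ sphere (0 : ℂ) 1) :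
    ζ - β ≠ 0 :=
  fun h => hβ (by simpa [sub_eq_zero.mp h] using hζ)

lemma one_sub_mul_inv_ne_zero (hβ : ‖β‖ ≠ 1) {ζ : ℂ} (hζ : ζ ∈ sphere (0 : ℂ) 1) :
    1 - β * ζ⁻¹ ≠ 0 := by
  have hζ0 := ne_zero_of_mem_sphere_one hζ
  rw [show 1 - β * ζ⁻¹ = (ζ - β) / ζ by field_simp]
  exact div_ne_zero (sub_ne_zero_of_mem_sphere hβ hζ) hζ0

lemma geronimusWeight_mul (hβ : ‖β‖ ≠ 1) {ζ : ℂ} (hζ : ζ ∈ sphere (0 : ℂ) 1) :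
    geronimusWeight w β ζ * (1 - β * ζ⁻¹) = w ζ :=
  div_mul_cancel₀ _ (one_sub_mul_inv_ne_zero hβ hζ)

variable (hw : ContinuousOn w (sphere 0 1)) (hβ : ‖β‖ ≠ 1)
include hw hβ

lemma continuousOn_geronimusWeight : ContinuousOn (geronimusWeight w β) (sphere 0 1) :=
  hw.div (continuousOn_const.sub (continuousOn_const.mul continuousOn_inv_sphere))
    fun _ hζ => one_sub_mul_inv_ne_zero hβ hζ

lemma circlePairing_X_sub_C_mul (p q : ℂ[X]) :
    circlePairing (continuousOn_geronimusWeight hw hβ) ((X - C β) * p) q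
      = circlePairing hw (X * p) q :=
  circlePairing_congr _ _ fun ζ hζ => by
    have hζ0 := ne_zero_of_mem_sphere_one hζ
    rw [← geronimusWeight_mul (w := w) hβ hζ]
    simp only [eval_mul, eval_sub, eval_X, eval_C]
    field_simp

lemma circlePairing_eq_sub (p q : ℂ[X]) :
    circlePairing hw p q = circlePairing (continuousOn_geronimusWeight hw hβ) p q
      - β * circlePairing (continuousOn_geronimusWeight hw hβ) p (X * q) := by
  rw [← smul_eq_mul, ← map_smul, ← map_sub]
  refine circlePairing_congr _ _ fun ζ hζ => ?_
  rw [← geronimusWeight_mul (w := w) hβ hζ]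
  simp only [eval_sub, eval_smul, eval_mul, eval_X, smul_eq_mul]
  ring

lemma circleAvg_cara_mul (p q : ℂ[X]) :
    circleAvg (fun ζ => (ζ + β) / (ζ - β) * w ζ * p.eval ζ * q.eval ζ⁻¹)
      = 2 * circlePairing (continuousOn_geronimusWeight hw hβ) p q - circlePairing hw p q := by
  rw [circlePairing_apply, circlePairing_apply, ← circleAvg_const_mul,
    ← circleAvg_sub (f := fun ζ => 2 * (geronimusWeight w β ζ * p.eval ζ * q.eval ζ⁻¹))
      (continuousOn_const.mul
        (continuousOn_circlePairing_integrand (continuousOn_geronimusWeight hw hβ) p q))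
      (continuousOn_circlePairing_integrand hw p q)]
  refine circleAvg_congr fun ζ hζ => ?_
  have := ne_zero_of_mem_sphere_one hζ
  have := sub_ne_zero_of_mem_sphere hβ hζ
  have := one_sub_mul_inv_ne_zero hβ hζ
  simp only [geronimusWeight]
  field_simp
  ring

lemma cara_eq_circlePairing :
    cara w β
      = 2 * circlePairing (continuousOn_geronimusWeight hw hβ) 1 1 - circlePairing hw 1 1 := by
  simpa [cara] using circleAvg_cara_mul hw hβ 1 1

end GeronimusWeight

namespace BOPS

variable {w : ℂ → ℂ} {β : ℂ} (S : BOPS w)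

lemma ξ_eq_circlePairing (hw : ContinuousOn w (sphere 0 1)) (hβ : ‖β‖ ≠ 1) (n : ℕ) :
    S.ξ n β = 2 * circlePairing (continuousOn_geronimusWeight hw hβ) (S.φ n) 1 := by
  cases n with
  | zero =>
      rw [ξ, cara_eq_circlePairing hw hβ, fCoeff_zero_eq_circlePairing hw, φ_zero, circlePairing_C]
      ring
  | succ n =>
      have hcara := circleAvg_cara_mul hw hβ (S.φ (n + 1)) 1
      simp only [eval_one, mul_one] at hcara
      rw [ξ, hcara, S.circlePairing_φ hw (degree_one_le.trans (by positivity)), coeff_one,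
        if_neg n.succ_ne_zero, zero_div, sub_zero]

lemma ξs_eq_circlePairing (hw : ContinuousOn w (sphere 0 1)) (hβ : ‖β‖ ≠ 1) (n : ℕ) :
    S.ξs n β = -2 * β ^ (n + 1)
      * circlePairing (continuousOn_geronimusWeight hw hβ) 1 (X * S.φb n) := by
  cases n with
  | zero =>
      have hsub := circlePairing_eq_sub hw hβ 1 1
      rw [mul_one] at hsub
      rw [ξs, cara_eq_circlePairing hw hβ, fCoeff_zero_eq_circlePairing hw, φb_zero, X_mul_C,
        C_mul', map_smul, smul_eq_mul]
      linear_combination (2 * S.κ 0) * hsub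
  | succ n =>
      have hcara := circleAvg_cara_mul hw hβ 1 (S.φb (n + 1))
      have hsub := circlePairing_eq_sub hw hβ 1 (S.φb (n + 1))
      have hw0 : circlePairing hw 1 (S.φb (n + 1)) = 0 := by
        rw [S.circlePairing_φb hw (degree_one_le.trans (by positivity)), coeff_one,
          if_neg n.succ_ne_zero, zero_div]
      simp only [eval_one, mul_one] at hcara
      rw [ξs, hcara, hw0]
      rw [hw0] at hsub
      linear_combination 2 * β ^ (n + 1) * hsub

lemma sum_eval_zero_mul_ξ (hw : ContinuousOn w (sphere 0 1)) (hβ : ‖β‖ ≠ 1) (m : ℕ) :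
    ∑ j ∈ Finset.range (m + 1), (S.φb j).eval 0 * S.ξ j β = 2 - S.κ m * S.ξs m β := by
  have hV := continuousOn_geronimusWeight hw hβ
  -- `G = (X^(m+1) - β^(m+1)) / (X - β)` turns the `W`-pairings of `φ*_m` and `X φ̄_m`
  -- into the `w`-pairing of the monic `G` with `φ̄_m`.
  obtain ⟨G, hGmul, hGmonic, hGdeg⟩ := exists_mul_X_sub_C_eq_X_pow_sub_C β m
  have hkey :
      S.κ m * (circlePairing hV (S.φs m) 1 - β ^ (m + 1) * circlePairing hV 1 (X * S.φb m)) = 1 :=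
    calc _ = S.κ m * circlePairing hV ((X - C β) * G) (X * S.φb m) := by
          rw [hGmul, φs, circlePairing_reflect hV (S.natDegree_φb_le m), mul_one,
            ← circlePairing_X_mul_X_mul hV, ← pow_succ', ← mul_one (C _), C_mul', map_sub,
            map_smul, LinearMap.sub_apply, LinearMap.smul_apply, smul_eq_mul]
      _ = S.κ m * circlePairing hw G (S.φb m) := by
          rw [circlePairing_X_sub_C_mul hw hβ, circlePairing_X_mul_X_mul]
      _ = 1 := by
          rw [S.circlePairing_φb hw (degree_le_of_natDegree_le hGdeg.le),
            show G.coeff m = 1 from hGdeg ▸ hGmonic.coeff_natDegree, mul_one_div_cancel (S.κ_ne m)]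
  have hCD := congrArg (fun p => circlePairing hV p 1) (S.sum_eval_zero_smul_φ hw m)
  simp only [map_sum, map_smul, LinearMap.sum_apply, LinearMap.smul_apply, smul_eq_mul] at hCD
  simp_rw [S.ξ_eq_circlePairing hw hβ, S.ξs_eq_circlePairing hw hβ, mul_left_comm _ (2 : ℂ),
    ← Finset.mul_sum, hCD]
  linear_combination 2 * hkey

end BOPS

section GeronimusTransform

variable {w : ℂ → ℂ} {β : ℂ} (S : BOPS w) (T : BOPS (geronimusWeight w β))
  (hw : ContinuousOn w (sphere 0 1)) (hβ : ‖β‖ ≠ 1)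
include hw hβ

lemma geronimus_φ_eq (d : ℕ) :
    T.φ (d + 1) = (T.κ (d + 1) / S.κ (d + 1)) • S.φ (d + 1)
      - (β * S.κ d / T.κ (d + 1)) • S.φ d := by
  have hV := continuousOn_geronimusWeight hw hβ
  have hcoeff (j : ℕ) (hj : j ≤ d) :
      circlePairing hw (T.φ (d + 1)) (S.φb j) = -(β * (S.φb j).coeff d / T.κ (d + 1)) := by
    have hdeg : (S.φb j).degree ≤ d := (S.degφb j).trans (by exact_mod_cast hj)
    rw [circlePairing_eq_sub hw hβ, T.circlePairing_φ hV (hdeg.trans (by exact_mod_cast d.le_succ)),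
      T.circlePairing_φ hV (degree_X_mul_le_succ hdeg), coeff_X_mul,
      coeff_eq_zero_of_degree_lt (hdeg.trans_lt (by exact_mod_cast d.lt_succ_self))]
    ring
  rw [S.eq_sum_circlePairing_φb_smul_φ hw (T.degφ (d + 1)), Finset.sum_range_succ,
    Finset.sum_range_succ, Finset.sum_eq_zero fun j hj => ?_, hcoeff d le_rfl, S.leadφb,
    S.circlePairing_φb hw (T.degφ _), T.leadφ, zero_add, neg_smul, neg_add_eq_sub]
  have hjd := Finset.mem_range.mp hj
  rw [hcoeff j hjd.le, coeff_eq_zero_of_degree_lt ((S.degφb j).trans_lt (by exact_mod_cast hjd)),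
    mul_zero, zero_div, neg_zero, zero_smul]

lemma geronimus_κ_sq_mul_ξ (d : ℕ) :
    T.κ (d + 1) ^ 2 * S.ξ (d + 1) β = β * S.κ (d + 1) * S.κ d * S.ξ d β := by
  have hV := continuousOn_geronimusWeight hw hβ
  have h0 : circlePairing hV (T.φ (d + 1)) 1 = 0 := by
    rw [T.circlePairing_φ hV (degree_one_le.trans (by positivity)), coeff_one,
      if_neg d.succ_ne_zero, zero_div]
  rw [geronimus_φ_eq S T hw hβ, map_sub, map_smul, map_smul] at h0
  simp only [LinearMap.sub_apply, LinearMap.smul_apply, smul_eq_mul] at h0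
  rw [S.ξ_eq_circlePairing hw hβ, S.ξ_eq_circlePairing hw hβ]
  have := T.κ_ne (d + 1)
  have := S.κ_ne (d + 1)
  field_simp at h0
  linear_combination 2 * h0

lemma geronimus_circlePairing_X_mul_φb {d : ℕ} {g : ℂ[X]} (hg : g.degree ≤ d) :
    circlePairing hw (X * g) (T.φb (d + 1)) = g.coeff d / T.κ (d + 1) := by
  have hdeg : ((X - C β) * g).degree ≤ ((d + 1 : ℕ) : WithBot ℕ) := by
    rw [sub_mul, C_mul']
    exact (degree_sub_le _ _).trans (max_le (degree_X_mul_le_succ hg)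
      ((degree_smul_le _ _).trans (hg.trans (by exact_mod_cast d.le_succ))))
  rw [← circlePairing_X_sub_C_mul hw hβ,
    T.circlePairing_φb (continuousOn_geronimusWeight hw hβ) hdeg,
    sub_mul, coeff_sub, coeff_X_mul, coeff_C_mul,
    coeff_eq_zero_of_degree_lt (n := d + 1) (hg.trans_lt (by exact_mod_cast d.lt_succ_self)),
    mul_zero, sub_zero]

lemma geronimus_eval_zero_φb_mul_ξ (d : ℕ) :
    (T.φb (d + 1)).eval 0 * S.ξ (d + 1) β * T.κ (d + 1) = S.κ (d + 1) * S.κ d * S.ξs d β := by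
  have hV := continuousOn_geronimusWeight hw hβ
  have hQdeg : (T.φs (d + 1)).degree ≤ (d + 1 : ℕ) := degree_reflect_le (T.natDegree_φb_le _)
  have hQ1 : circlePairing hV (T.φs (d + 1)) 1 = 1 / T.κ (d + 1) := by
    rw [BOPS.φs, circlePairing_reflect hV (T.natDegree_φb_le _), mul_one,
      T.circlePairing_φb hV (degree_X_pow_le _), coeff_X_pow_self]
  have hcoeff (j : ℕ) (hj : j ≤ d) :
      circlePairing hw (T.φs (d + 1)) (S.φb j) = (S.φb j).eval 0 / T.κ (d + 1) := by
    have hjd := (S.natDegree_φb_le j).trans hj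
    rw [BOPS.φs, circlePairing_reflect hw (T.natDegree_φb_le _), mul_comm,
      ← circlePairing_reflect hw (hjd.trans d.le_succ), reflect_succ hjd,
      geronimus_circlePairing_X_mul_φb T hw hβ (degree_reflect_le hjd), coeff_reflect_self,
      coeff_zero_eq_eval_zero]
  have htop :
      circlePairing hw (T.φs (d + 1)) (S.φb (d + 1)) = (T.φb (d + 1)).eval 0 / S.κ (d + 1) := by
    rw [S.circlePairing_φb hw hQdeg, BOPS.φs, coeff_reflect_self, coeff_zero_eq_eval_zero]
  have hexp := congrArg (fun p => circlePairing hV p 1) (S.eq_sum_circlePairing_φb_smul_φ hw hQdeg)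
  simp only [map_sum, map_smul, LinearMap.sum_apply, LinearMap.smul_apply, smul_eq_mul] at hexp
  rw [Finset.sum_range_succ, htop, hQ1, Finset.sum_congr rfl fun j hj => by
    rw [hcoeff j (Nat.lt_succ_iff.mp (Finset.mem_range.mp hj)), div_mul_eq_mul_div],
    ← Finset.sum_div] at hexp
  have hstar := S.sum_eval_zero_mul_ξ hw hβ d
  simp_rw [S.ξ_eq_circlePairing hw hβ, mul_left_comm _ (2 : ℂ), ← Finset.mul_sum] at hstar ⊢
  have := T.κ_ne (d + 1)
  have := S.κ_ne (d + 1)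
  field_simp at hexp
  linear_combination -2 * hexp - S.κ (d + 1) * hstar

end GeronimusTransform

theorem elementary_geronimus_conjugate_general (w : ℂ → ℂ)
    (hw : ContinuousOn w (Metric.sphere (0 : ℂ) 1))
    (S : BOPS w)
    (β : ℂ) (hβT : ‖β‖ ≠ 1) (hβ0 : β ≠ 0)
    (hξβ : ∀ n, S.ξ n β ≠ 0)
    (T : BOPS (fun ζ => w ζ / (1 - β * ζ⁻¹)))
    (n : ℕ) (hn : 1 ≤ n) :
    (T.κ n) ^ 2 = S.κ n * S.κ (n - 1) * β * S.ξ (n - 1) β / S.ξ n β ∧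
    T.r n = ((S.φ n).eval 0 * S.ξ (n - 1) β - (S.φ (n - 1)).eval 0 * S.ξ n β)
              / (S.κ n * S.ξ (n - 1) β) ∧
    T.rb n = S.ξs (n - 1) β / (β * S.ξ (n - 1) β) := by
  obtain ⟨d, rfl⟩ : ∃ d, n = d + 1 := ⟨n - 1, by omega⟩
  rw [Nat.add_sub_cancel]
  have hκ := geronimus_κ_sq_mul_ξ S T hw hβT d
  refine ⟨(eq_div_iff (hξβ (d + 1))).mpr (by linear_combination hκ), ?_, ?_⟩
  · have := T.κ_ne (d + 1)
    have := S.κ_ne (d + 1)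
    have := hξβ d
    rw [BOPS.r, geronimus_φ_eq S T hw hβT d, eval_sub, eval_smul, eval_smul, smul_eq_mul,
      smul_eq_mul]
    field_simp
    linear_combination (S.φ d).eval 0 * hκ
  · rw [BOPS.rb, div_eq_div_iff (T.κ_ne (d + 1)) (mul_ne_zero hβ0 (hξβ d))]
    refine mul_left_cancel₀ (mul_ne_zero (S.κ_ne (d + 1)) (S.κ_ne d)) ?_
    linear_combination T.κ (d + 1) * geronimus_eval_zero_φb_mul_ξ S T hw hβT d
      - (T.φb (d + 1)).eval 0 * hκ

/-- coefficients of the conjugated elementary Geronimus transformation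
`w ↦ w/(1 - β* ζ⁻¹)`. -/
theorem elementary_geronimus_conjugate (w : ℂ → ℂ)
    (hw : ContinuousOn w (Metric.sphere (0 : ℂ) 1))
    (hI : ∀ n, toeplitzDet w n ≠ 0) (S : BOPS w)
    (β : ℂ) (hβT : ‖β‖ ≠ 1) (hβ0 : β ≠ 0)
    (hξβ : ∀ n, S.ξ n β ≠ 0)
    (T : BOPS (fun ζ => w ζ / (1 - β * ζ⁻¹)))
    (n : ℕ) (hn : 1 ≤ n) :
    (T.κ n) ^ 2 = S.κ n * S.κ (n - 1) * β * S.ξ (n - 1) β / S.ξ n β ∧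
    T.r n = ((S.φ n).eval 0 * S.ξ (n - 1) β - (S.φ (n - 1)).eval 0 * S.ξ n β)
              / (S.κ n * S.ξ (n - 1) β) ∧
    T.rb n = S.ξs (n - 1) β / (β * S.ξ (n - 1) β) :=
  elementary_geronimus_conjugate_general w hw S β hβT hβ0 hξβ T n hn
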